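/- arXiv:1712.03053 — 3 statements merged into one kernel-verified Lean document; each statement's English description precedes it below -/
import Mathlib

section
/- There is an absolute constant C such that for every finite set R of at least two points in the Euclidean plane ℝ² and every set T of links obtained by arbitrarily orienting the edges of a minimum spanning tree of R, the chromatic number of the conflict graph G_1(T) is at most C. -/
noncomputable section

open scoped BigOperators

abbrev Pt : Type := EuclideanSpace ℝ (Fin 2)

instance : DecidableEq Pt := Classical.decEq _

abbrev Link : Type := Pt × Pt

def len (i : Link) : ℝ := dist i.1 i.2

def dd (i j : Link) : ℝ :=
  min (min (dist i.1 j.1) (dist i.1 j.2)) (min (dist i.2 j.1) (dist i.2 j.2))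

def PFeasible (α β : ℝ) (S : Finset Link) (P : Link → ℝ) : Prop :=
  (∀ i ∈ S, 0 < P i) ∧
  ∀ i ∈ S, β * ∑ j ∈ S.erase i, P j / dist j.1 i.2 ^ α ≤ P i / len i ^ α

def Feasible (α β : ℝ) (S : Finset Link) : Prop := ∃ P, PFeasible α β S P

def oblPower (α τ : ℝ) : Link → ℝ := fun i => len i ^ (τ * α)

def linkDiversity (S : Finset Link) : ℝ :=
  if h : S.Nonempty then S.sup' h len / S.inf' h len else 1

def logStar (x : ℝ) : ℕ := sInf {k : ℕ | (Real.logb 2)^[k] x ≤ 1}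

def IsSpanningTreeLinks (R : Finset Pt) (S : Finset Link) : Prop :=
  (∀ i ∈ S, i.1 ∈ R ∧ i.2 ∈ R ∧ i.1 ≠ i.2) ∧
  S.card + 1 = R.card ∧
  (SimpleGraph.fromRel fun x y : {p : Pt // p ∈ R} => ((x : Pt), (y : Pt)) ∈ S).Connected

def IsMSTLinks (R : Finset Pt) (S : Finset Link) : Prop :=
  IsSpanningTreeLinks R S ∧
  ∀ S' : Finset Link, IsSpanningTreeLinks R S' → ∑ i ∈ S, len i ≤ ∑ i ∈ S', len i

def emb (t : ℝ) : Pt := (WithLp.equiv 2 (Fin 2 → ℝ)).symm ![t, 0]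

def NodeDisjoint (i j : Link) : Prop :=
  i.1 ≠ j.1 ∧ i.1 ≠ j.2 ∧ i.2 ≠ j.1 ∧ i.2 ≠ j.2

def ptDiversity (R : Finset ℝ) : ℝ :=
  if h : R.offDiag.Nonempty then
    (R.offDiag.sup' h fun p => |p.1 - p.2|) / (R.offDiag.inf' h fun p => |p.1 - p.2|)
  else 1

def G1 (T : Finset Link) : SimpleGraph {i : Link // i ∈ T} :=
  SimpleGraph.fromRel fun i j => dd ↑i ↑j ≤ min (len ↑i) (len ↑j)

/-!
Colour the links greedily from the longest to the shortest: it suffices that every MST link `e`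
conflicts with boundedly many links `f` that are at least as long. Such an `f` has an endpoint
within `2 len e` of `e`. Two of them, `f` and a shorter `f'`, cannot have endpoints within
`len e / 5` of each other and unit directions within `1 / 10` of each other: deleting `f` from the
tree leaves `f'` on one side of the cut, and one of the two pairs of matching endpoints then
reconnects the cut more cheaply than `f`, against the cut property of minimum spanning trees.
Sorting the positions and directions into a grid of `41 ^ 4` cells, pigeonhole finishes.
-/

open Finset

namespace SimpleGraph

variable {V : Type*} (G : SimpleGraph V)

def upperNeighbors [Fintype V] [DecidableRel G.Adj] {α : Type*} [LinearOrder α] (w : V → α)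
    (v : V) : Finset V :=
  univ.filter fun u => G.Adj v u ∧ w v ≤ w u

theorem colorable_succ_of_card_upperNeighbors_le [Fintype V] [DecidableRel G.Adj]
    {α : Type*} [LinearOrder α] (w : V → α) {K : ℕ} (h : ∀ v, #(G.upperNeighbors w v) ≤ K) :
    G.Colorable (K + 1) := by
  classical
  suffices ∀ s : Finset V, ∃ c : V → Fin (K + 1), ∀ u ∈ s, ∀ v ∈ s, G.Adj u v → c u ≠ c v by
    obtain ⟨c, hc⟩ := this univ
    exact ⟨⟨c, fun huv => hc _ (mem_univ _) _ (mem_univ _) huv⟩⟩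
  intro s
  induction s using Finset.induction_on_min_value w with
  | empty => exact ⟨0, by simp⟩
  | insert a s ha hmin ih =>
    obtain ⟨c, hc⟩ := ih
    have hfree : #((s.filter (G.Adj a)).image c) < #(univ : Finset (Fin (K + 1))) := calc
      _ ≤ #(s.filter (G.Adj a)) := card_image_le
      _ ≤ #(G.upperNeighbors w a) := card_le_card fun u hu => by
        simp only [mem_filter, upperNeighbors, mem_univ, true_and] at hu ⊢
        exact ⟨hu.2, hmin u hu.1⟩
      _ < #(univ : Finset (Fin (K + 1))) := by simpa using Nat.lt_succ_of_le (h a)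
    obtain ⟨col, -, hcol⟩ := exists_mem_notMem_of_card_lt_card hfree
    refine ⟨Function.update c a col, ?_⟩
    simp only [mem_insert, mem_image, mem_filter, not_exists, not_and] at hcol ⊢
    rintro u (rfl | hu) v (rfl | hv) huv
    · exact absurd rfl huv.ne
    · rw [Function.update_self, Function.update_of_ne (ne_of_mem_of_not_mem hv ha)]
      exact fun h => hcol v ⟨hv, huv⟩ h.symm
    · rw [Function.update_self, Function.update_of_ne (ne_of_mem_of_not_mem hu ha)]
      exact hcol u ⟨hu, huv.symm⟩
    · rw [Function.update_of_ne (ne_of_mem_of_not_mem hu ha),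
        Function.update_of_ne (ne_of_mem_of_not_mem hv ha)]
      exact hc u hu v hv huv

variable {G} {H : SimpleGraph V} {a b v : V}

theorem reachable_or_reachable_of_le_sup_edge (hle : G ≤ H ⊔ edge a b) (h : G.Reachable v a) :
    H.Reachable v a ∨ H.Reachable v b := by
  obtain ⟨p⟩ := h
  induction p with
  | nil => exact .inl .rfl
  | @cons v u a hvu p ih =>
    rcases hle hvu with hH | hab
    · exact (ih hle).imp hH.reachable.trans hH.reachable.trans
    · rcases ((edge_adj _ _ _ _).mp hab).1 with ⟨rfl, -⟩ | ⟨rfl, -⟩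
      · exact .inl .rfl
      · exact .inr .rfl

end SimpleGraph

section GridCell

variable {ι : Type*} [Fintype ι]

def gridCell (s : ℝ) (x : EuclideanSpace ℝ ι) : ι → ℤ := fun i => ⌊x i / s⌋

theorem norm_le_sum_abs (x : EuclideanSpace ℝ ι) : ‖x‖ ≤ ∑ i, |x i| := by
  rw [EuclideanSpace.norm_eq, Real.sqrt_le_left (sum_nonneg fun i _ => abs_nonneg _)]
  simpa only [Real.norm_eq_abs] using
    sum_sq_le_sq_sum_of_nonneg (s := univ) fun i _ => abs_nonneg (x i)

theorem gridCell_mem_Icc {s : ℝ} (hs : 0 < s) {n : ℤ} {x : EuclideanSpace ℝ ι}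
    (hx : ‖x‖ ≤ n * s) (i : ι) : gridCell s x i ∈ Icc (-n) n := by
  have hi : |x i / s| ≤ n := by
    rw [abs_div, abs_of_pos hs, div_le_iff₀ hs]
    exact (Real.norm_eq_abs _ ▸ PiLp.norm_apply_le x i).trans hx
  obtain ⟨hlo, hhi⟩ := abs_le.mp hi
  exact mem_Icc.mpr ⟨Int.le_floor.mpr (by push_cast; linarith),
    Int.floor_le_iff.mpr (by push_cast; linarith)⟩

theorem norm_sub_lt_of_gridCell_eq [Nonempty ι] {s : ℝ} (hs : 0 < s) {x y : EuclideanSpace ℝ ι}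
    (h : gridCell s x = gridCell s y) : ‖x - y‖ < Fintype.card ι * s := by
  have hcoord (i : ι) : |(x - y) i| < s := by
    have := Int.abs_sub_lt_one_of_floor_eq_floor (congrFun h i)
    rwa [← sub_div, abs_div, abs_of_pos hs, div_lt_one hs] at this
  calc ‖x - y‖ ≤ ∑ i, |(x - y) i| := norm_le_sum_abs _
    _ < ∑ _ : ι, s := sum_lt_sum_of_nonempty univ_nonempty fun i _ => hcoord i
    _ = Fintype.card ι * s := by simp

end GridCell

theorem dist_lt_of_near_of_parallel {E : Type*} [NormedAddCommGroup E] [NormedSpace ℝ E]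
    {a b a' b' : E} {ℓ : ℝ} (hℓ : ℓ ≤ dist a' b') (hle : dist a' b' ≤ dist a b)
    (hnear : dist a a' < ℓ / 5)
    (hpar : ‖(dist a b)⁻¹ • (b - a) - (dist a' b')⁻¹ • (b' - a')‖ < 1 / 10) :
    dist b b' < dist a b := by
  have hℓ0 : 0 < ℓ := by linarith [dist_nonneg (x := a) (y := a')]
  have hL : 0 < dist a b := by linarith
  have hL' : 0 < dist a' b' := by linarith
  have hu : ‖(dist a b)⁻¹ • (b - a)‖ = 1 := by
    rw [norm_smul_of_nonneg (inv_nonneg.mpr hL.le), ← dist_eq_norm, dist_comm b a]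
    exact inv_mul_cancel₀ hL.ne'
  generalize hu_def : (dist a b)⁻¹ • (b - a) = u at hu hpar
  generalize hu'_def : (dist a' b')⁻¹ • (b' - a') = u' at hpar
  have hb : b - b' = (a - a') + ((dist a b - dist a' b') • u + dist a' b' • (u - u')) := by
    have hba : b - a = dist a b • u := by rw [← hu_def, smul_inv_smul₀ hL.ne']
    have hba' : b' - a' = dist a' b' • u' := by rw [← hu'_def, smul_inv_smul₀ hL'.ne']
    rw [show b - b' = (a - a') + ((b - a) - (b' - a')) by abel, hba, hba']
    module
  calc dist b b' ≤ dist a a' + ((dist a b - dist a' b') * ‖u‖ + dist a' b' * ‖u - u'‖) := by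
        rw [dist_eq_norm, hb, ← norm_smul_of_nonneg (sub_nonneg.mpr hle),
          ← norm_smul_of_nonneg hL'.le, dist_eq_norm a a']
        exact (norm_add_le _ _).trans (add_le_add_right (norm_add_le _ _) _)
    _ < dist a b := by rw [hu]; nlinarith

abbrev linkGraph (R : Finset Pt) (S : Finset Link) : SimpleGraph {p : Pt // p ∈ R} :=
  SimpleGraph.fromRel fun x y => ((x : Pt), (y : Pt)) ∈ S

theorem card_le_card_add_one_of_connected {R : Finset Pt} {S : Finset Link}
    (h : (linkGraph R S).Connected) : #R ≤ #S + 1 := by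
  classical
  have hedges : Nat.card (linkGraph R S).edgeSet ≤ #S := by
    rw [Nat.card_eq_fintype_card, ← SimpleGraph.edgeFinset_card,
      ← card_map ⟨Sym2.map Subtype.val, Sym2.map.injective Subtype.val_injective⟩]
    refine (card_le_card fun z hz => ?_).trans (card_image_le (f := fun i : Link => s(i.1, i.2)))
    obtain ⟨e, he, rfl⟩ := mem_map.mp hz
    induction e using Sym2.ind with
    | _ x y =>
      rw [SimpleGraph.mem_edgeFinset, SimpleGraph.mem_edgeSet, SimpleGraph.fromRel_adj] at he
      rcases he.2 with hxy | hyx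
      · exact mem_image.mpr ⟨_, hxy, rfl⟩
      · exact mem_image.mpr ⟨_, hyx, Sym2.eq_swap⟩
  simpa using h.card_vert_le_card_edgeSet_add_one.trans (Nat.add_le_add_right hedges 1)

theorem linkGraph_mono {R : Finset Pt} {S S' : Finset Link} (h : S ⊆ S') :
    linkGraph R S ≤ linkGraph R S' := fun _ _ hxy =>
  (SimpleGraph.fromRel_adj _ _ _).mpr (((SimpleGraph.fromRel_adj _ _ _).mp hxy).imp_right
    (Or.imp (@h _) (@h _)))

section SpanningTree

variable {R : Finset Pt} {S : Finset Link} {f : Link} {p q : {x : Pt // x ∈ R}}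

theorem linkGraph_le_erase_sup_edge (hpq : ((p : Pt), (q : Pt)) = f ∨ ((q : Pt), (p : Pt)) = f) :
    linkGraph R S ≤ linkGraph R (S.erase f) ⊔ SimpleGraph.edge p q := by
  intro x y hxy
  rw [SimpleGraph.fromRel_adj] at hxy
  by_cases hf : s(p, q) = s(x, y)
  · exact .inr (by rw [SimpleGraph.adj_edge]; exact ⟨hf, hxy.1⟩)
  · left
    rw [SimpleGraph.fromRel_adj, mem_erase, mem_erase]
    refine ⟨hxy.1, hxy.2.imp (fun h => ⟨?_, h⟩) (fun h => ⟨?_, h⟩)⟩ <;> rintro rfl <;>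
      rcases hpq with h | h <;> simp only [Prod.mk.injEq, ← Subtype.ext_iff] at h <;>
      obtain ⟨rfl, rfl⟩ := h <;> simp at hf

theorem reachable_or_reachable_erase (hS : IsSpanningTreeLinks R S)
    (hpq : ((p : Pt), (q : Pt)) = f ∨ ((q : Pt), (p : Pt)) = f) (v : {x : Pt // x ∈ R}) :
    (linkGraph R (S.erase f)).Reachable v p ∨ (linkGraph R (S.erase f)).Reachable v q :=
  SimpleGraph.reachable_or_reachable_of_le_sup_edge (linkGraph_le_erase_sup_edge hpq) (hS.2.2 v p)

theorem not_reachable_erase (hS : IsSpanningTreeLinks R S) (hf : f ∈ S)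
    (hpq : ((p : Pt), (q : Pt)) = f ∨ ((q : Pt), (p : Pt)) = f) :
    ¬ (linkGraph R (S.erase f)).Reachable p q := by
  intro hpq'
  have hreach (v) : (linkGraph R (S.erase f)).Reachable v p :=
    (reachable_or_reachable_erase hS hpq v).elim id (·.trans hpq'.symm)
  have : Nonempty {x // x ∈ R} := ⟨p⟩
  have := card_le_card_add_one_of_connected
    (SimpleGraph.Connected.mk (V := {x // x ∈ R}) fun v w => (hreach v).trans (hreach w).symm)
  have := hS.2.1
  rw [card_erase_of_mem hf] at *
  have := card_pos.mpr ⟨f, hf⟩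
  omega

theorem len_le_dist_of_reachable_erase (hS : IsMSTLinks R S) (hf : f ∈ S)
    (hpq : ((p : Pt), (q : Pt)) = f ∨ ((q : Pt), (p : Pt)) = f) {v w : {x : Pt // x ∈ R}}
    (hv : (linkGraph R (S.erase f)).Reachable v p) (hw : (linkGraph R (S.erase f)).Reachable w q) :
    len f ≤ dist (v : Pt) w := by
  set G := linkGraph R (S.erase f)
  set S' := insert ((v : Pt), (w : Pt)) (S.erase f)
  have hvw : v ≠ w := by
    rintro rfl
    exact not_reachable_erase hS.1 hf hpq (hv.symm.trans hw)
  have hvw' : ((v : Pt), (w : Pt)) ∉ S.erase f := fun h => by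
    have hadj : G.Adj v w := (SimpleGraph.fromRel_adj _ _ _).mpr ⟨hvw, .inl h⟩
    exact not_reachable_erase hS.1 hf hpq ((hv.symm.trans hadj.reachable).trans hw)
  have hS' : IsSpanningTreeLinks R S' := by
    refine ⟨fun i hi => ?_, ?_, ?_⟩
    · rcases mem_insert.mp hi with rfl | hi
      · exact ⟨v.2, w.2, Subtype.coe_ne_coe.mpr hvw⟩
      · exact hS.1.1 i (mem_of_mem_erase hi)
    · have := hS.1.2.1
      have := card_pos.mpr ⟨f, hf⟩
      rw [card_insert_of_notMem hvw', card_erase_of_mem hf]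
      omega
    · have hle : G ≤ linkGraph R S' := linkGraph_mono (subset_insert _ _)
      have hadj : (linkGraph R S').Adj v w :=
        (SimpleGraph.fromRel_adj _ _ _).mpr ⟨hvw, .inl (mem_insert_self _ _)⟩
      have hqp : (linkGraph R S').Reachable q p :=
        (hw.mono hle).symm.trans (hadj.reachable.symm.trans (hv.mono hle))
      have hreach (x) : (linkGraph R S').Reachable x p :=
        (reachable_or_reachable_erase hS.1 hpq x).elim (·.mono hle) fun h => (h.mono hle).trans hqp
      have : Nonempty {x // x ∈ R} := ⟨p⟩
      exact SimpleGraph.Connected.mk fun x y => (hreach x).trans (hreach y).symm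
  have := hS.2 S' hS'
  rw [sum_insert hvw', ← add_sum_erase S len hf] at this
  simpa [len] using this

end SpanningTree

theorem mem_of_orientation {R : Finset Pt} {S : Finset Link} (hS : IsSpanningTreeLinks R S)
    {f g : Link} (hf : f ∈ S) (hg : g = f ∨ g.swap = f) : g.1 ∈ R ∧ g.2 ∈ R ∧ g.1 ≠ g.2 := by
  obtain ⟨h1, h2, hne⟩ := hS.1 f hf
  rcases hg with rfl | rfl
  exacts [⟨h1, h2, hne⟩, ⟨h2, h1, hne.symm⟩]

theorem len_of_orientation {f g : Link} (hg : g = f ∨ g.swap = f) : len g = len f := by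
  rcases hg with rfl | rfl
  exacts [rfl, dist_comm _ _]

theorem len_le_dist_fst_or_dist_snd {R : Finset Pt} {S : Finset Link} (hS : IsMSTLinks R S)
    {f f' g g' : Link} (hf : f ∈ S) (hf' : f' ∈ S) (hne : f' ≠ f) (hg : g = f ∨ g.swap = f)
    (hg' : g' = f' ∨ g'.swap = f') : len f ≤ dist g.1 g'.1 ∨ len f ≤ dist g.2 g'.2 := by
  obtain ⟨hp, hq, -⟩ := mem_of_orientation hS.1 hf hg
  obtain ⟨hp', hq', hpq'⟩ := mem_of_orientation hS.1 hf' hg'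
  let P : {x // x ∈ R} := ⟨g.1, hp⟩
  let Q : {x // x ∈ R} := ⟨g.2, hq⟩
  let P' : {x // x ∈ R} := ⟨g'.1, hp'⟩
  let Q' : {x // x ∈ R} := ⟨g'.2, hq'⟩
  have hadj : (linkGraph R (S.erase f)).Adj P' Q' := by
    refine (SimpleGraph.fromRel_adj _ _ _).mpr ⟨Subtype.coe_ne_coe.mp hpq', ?_⟩
    rcases hg' with rfl | rfl
    exacts [.inl (mem_erase.mpr ⟨hne, hf'⟩), .inr (mem_erase.mpr ⟨hne, hf'⟩)]
  -- `f'` does not cross the cut of the tree at `f`, so `P'` and `Q'` lie on the same side.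
  rcases reachable_or_reachable_erase (p := P) (q := Q) hS.1 hg P' with h | h
  · right
    rw [dist_comm]
    exact len_le_dist_of_reachable_erase (v := Q') (w := Q) hS hf hg
      (hadj.symm.reachable.trans h) .rfl
  · left
    exact len_le_dist_of_reachable_erase (v := P) (w := P') hS hf hg .rfl h

def unitDir (g : Link) : Pt := (len g)⁻¹ • (g.2 - g.1)

theorem false_of_near_of_parallel {R : Finset Pt} {S : Finset Link} (hS : IsMSTLinks R S)
    {f f' g g' : Link} (hf : f ∈ S) (hf' : f' ∈ S) (hne : f ≠ f') (hg : g = f ∨ g.swap = f)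
    (hg' : g' = f' ∨ g'.swap = f') {ℓ : ℝ} (hℓ : ℓ ≤ len f) (hℓ' : ℓ ≤ len f')
    (hnear : dist g.1 g'.1 < ℓ / 5)
    (hpar : ‖unitDir g - unitDir g'‖ < 1 / 10) : False := by
  wlog hff' : len f' ≤ len f generalizing f f' g g'
  · exact this hf' hf hne.symm hg' hg hℓ' hℓ (by rwa [dist_comm]) (by rwa [norm_sub_rev])
      (le_of_not_ge hff')
  rw [← len_of_orientation hg] at hℓ hff'
  rw [← len_of_orientation hg'] at hℓ' hff'
  have hℓ0 : 0 < ℓ := by linarith [dist_nonneg (x := g.1) (y := g'.1)]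
  have hlen := len_of_orientation hg
  rcases len_le_dist_fst_or_dist_snd hS hf hf' hne.symm hg hg' with h | h
  · linarith
  · have hfar : dist g.2 g'.2 < len g := dist_lt_of_near_of_parallel hℓ' hff' hnear hpar
    linarith

theorem dd_comm (i j : Link) : dd i j = dd j i := by
  simp only [dd, dist_comm i.1, dist_comm i.2, min_min_min_comm]

theorem dd_le_len_of_G1_adj {T : Finset Link} {e f : {i : Link // i ∈ T}} (h : (G1 T).Adj e f)
    (hlen : len e ≤ len f) : dd e f ≤ len e := by
  rw [G1, SimpleGraph.fromRel_adj, dd_comm f, min_comm (len f), or_self, min_eq_left hlen] at h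
  exact h.2

def nearOrientation (e f : Link) : Link :=
  if dist f.1 e.1 ≤ len e ∨ dist f.1 e.2 ≤ len e then f else f.swap

theorem nearOrientation_eq_or_swap_eq (e f : Link) :
    nearOrientation e f = f ∨ (nearOrientation e f).swap = f := by
  unfold nearOrientation
  split_ifs
  exacts [.inl rfl, .inr f.swap_swap]

theorem dist_nearOrientation_fst_le {e f : Link} (h : dd e f ≤ len e) :
    dist (nearOrientation e f).1 e.1 ≤ 2 * len e := by
  have hnear :
      dist (nearOrientation e f).1 e.1 ≤ len e ∨ dist (nearOrientation e f).1 e.2 ≤ len e := by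
    unfold nearOrientation
    split_ifs with hf
    · exact hf
    · simp only [dd, min_le_iff, dist_comm e.1, dist_comm e.2] at h
      simp only [Prod.fst_swap]
      tauto
  have : dist e.2 e.1 = len e := dist_comm _ _
  have : 0 ≤ len e := dist_nonneg
  rcases hnear with h1 | h2
  · linarith
  · linarith [dist_triangle (nearOrientation e f).1 e.2 e.1]

def linkCell (e g : Link) : Fin 2 ⊕ Fin 2 → ℤ :=
  Sum.elim (gridCell (len e / 10) (g.1 - e.1)) (gridCell (1 / 20) (unitDir g))

def cellBox : Finset (Fin 2 ⊕ Fin 2 → ℤ) := Fintype.piFinset fun _ => Icc (-20) 20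

theorem card_cellBox : #cellBox = 41 ^ 4 := by
  rw [cellBox, Fintype.card_piFinset, prod_const, Int.card_Icc]
  rfl

theorem linkCell_mem {e g : Link} (he : 0 < len e) (hg : 0 < len g)
    (hnear : dist g.1 e.1 ≤ 2 * len e) :
    linkCell e g ∈ cellBox := by
  rw [cellBox, Fintype.mem_piFinset]
  rintro (i | i)
  · apply gridCell_mem_Icc (n := 20) (by positivity)
    rw [← dist_eq_norm]
    push_cast
    linarith
  · apply gridCell_mem_Icc (n := 20) (by norm_num)
    rw [unitDir, norm_smul_of_nonneg (inv_nonneg.mpr hg.le), ← dist_eq_norm, dist_comm]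
    exact (inv_mul_cancel₀ hg.ne').le.trans (by norm_num)

theorem near_and_parallel_of_linkCell_eq {e g g' : Link} (he : 0 < len e)
    (h : linkCell e g = linkCell e g') :
    dist g.1 g'.1 < len e / 5 ∧ ‖unitDir g - unitDir g'‖ < 1 / 10 := by
  constructor
  · have := norm_sub_lt_of_gridCell_eq (by positivity) (funext fun i => congrFun h (.inl i))
    rw [sub_sub_sub_cancel_right, ← dist_eq_norm] at this
    norm_num at this
    linarith
  · have := norm_sub_lt_of_gridCell_eq (by norm_num) (funext fun i => congrFun h (.inr i))
    norm_num at this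
    linarith

theorem card_upperNeighbors_G1_le {R : Finset Pt} {T : Finset Link} (hT : IsMSTLinks R T)
    [DecidableRel (G1 T).Adj] (e : {i : Link // i ∈ T}) :
    #((G1 T).upperNeighbors (fun i => len i) e) ≤ 41 ^ 4 := by
  by_contra! hcard
  have hℓ : 0 < len e := dist_pos.mpr (hT.1.1 e e.2).2.2
  have hupper {f} (hf : f ∈ (G1 T).upperNeighbors (fun i => len i) e) :
      dd e f ≤ len e ∧ len e ≤ len f := by
    simp only [SimpleGraph.upperNeighbors, mem_filter, mem_univ, true_and] at hf
    exact ⟨dd_le_len_of_G1_adj hf.1 hf.2, hf.2⟩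
  have hmaps : ∀ f ∈ (G1 T).upperNeighbors (fun i => len i) e,
      linkCell e (nearOrientation e f) ∈ cellBox :=
    fun f hf => linkCell_mem hℓ
      (by rw [len_of_orientation (nearOrientation_eq_or_swap_eq _ _)]; linarith [(hupper hf).2])
      (dist_nearOrientation_fst_le (hupper hf).1)
  obtain ⟨f, hf, f', hf', hne, heq⟩ :=
    exists_ne_map_eq_of_card_lt_of_maps_to (card_cellBox.trans_lt hcard) hmaps
  obtain ⟨hnear, hpar⟩ := near_and_parallel_of_linkCell_eq hℓ heq
  exact false_of_near_of_parallel hT f.2 f'.2 (Subtype.coe_ne_coe.mpr hne)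
    (nearOrientation_eq_or_swap_eq _ _) (nearOrientation_eq_or_swap_eq _ _) (hupper hf).2
    (hupper hf').2 hnear hpar

/-- There is an absolute constant `C` bounding the chromatic number of the
conflict graph `G_1(T)` of any arbitrarily-oriented MST `T` of at least two points in the
plane. -/
theorem mst_conflict_graph_chromatic_bound :
    ∃ C : ℕ, ∀ R : Finset Pt, 2 ≤ R.card →
      ∀ T : Finset Link, IsMSTLinks R T →
        (G1 T).chromaticNumber ≤ (C : ℕ∞) := by
  refine ⟨41 ^ 4 + 1, fun R _ T hT => ?_⟩
  classical
  exact_mod_cast ((G1 T).colorable_succ_of_card_upperNeighbors_le _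
    (card_upperNeighbors_G1_le hT)).chromaticNumber_le
end
end

section
/- Fix α > 2, β > 0, τ ∈ (0,1), and let τ' = min{τ, 1−τ}. There exists x₀ > 0 depending only on α, β, τ such that for every x ≥ x₀ and every n ≥ 2 the following holds. Let p_1 < p_2 < … < p_n be points on the real line with gaps p_{t+1} − p_t = x^{(1/τ')^{t−1}} for t = 1, …, n−1. Then for any two links i, j whose four endpoints are among {p_1, …, p_n} and which do not share an endpoint, the pair {i, j} is not P_τ-feasible. -/
noncomputable section

open scoped BigOperators

/-!
Let the largest index `M` among the four endpoints belong to the link `L`, and let `S` be the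
other link. The gaps at least double, so all distances among the other three points are at most
`2 g (M - 2)`, where `g t = x ^ (1 / τ') ^ t`; meanwhile `len L ≥ g (M - 1) = g (M - 2) ^ (1 / τ')`
and `len S ≥ x`. Under `P_τ`, the SINR condition of a link `k` against `m` says
`dist m.1 k.2 ≥ β ^ (1 / α) · len m ^ τ · len k ^ (1 - τ)`. If `M` is the sender of `L`, apply it
to `k = L`; if `M` is the receiver, to `k = S`. Either way the interference distance avoids `M`,
and the right-hand side is at least `β ^ (1 / α) x ^ τ' g (M - 2) > 2 g (M - 2)` once `x` is large.
-/

open Finset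

lemma emb_dist (a b : ℝ) : dist (emb a) (emb b) = |a - b| := by
  rw [EuclideanSpace.dist_eq]
  simp [emb, Fin.sum_univ_two, Real.sqrt_sq_eq_abs, Real.dist_eq]

lemma PFeasible.oblPower_pair_le_dist {α β τ : ℝ} {i j : Link} (hα : 0 < α) (hβ : 0 ≤ β)
    (hij : i ≠ j) (hi : 0 < len i) (hji : 0 < dist j.1 i.2)
    (h : PFeasible α β {i, j} (oblPower α τ)) :
    β ^ α⁻¹ * (len j ^ τ * len i ^ (1 - τ)) ≤ dist j.1 i.2 := by
  have hsinr := h.2 i (mem_insert_self i {j})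
  rw [erase_insert (notMem_singleton.mpr hij), sum_singleton] at hsinr
  simp only [oblPower] at hsinr
  have hj : 0 ≤ len j := dist_nonneg
  have hsplit : len i ^ α = len i ^ (τ * α) * len i ^ ((1 - τ) * α) := by
    rw [← Real.rpow_add hi]; ring_nf
  have hpow : β * (len j ^ (τ * α) * len i ^ ((1 - τ) * α)) ≤ dist j.1 i.2 ^ α := by
    rw [hsplit, mul_div_assoc', div_le_div_iff₀ (by positivity) (by positivity)] at hsinr
    nlinarith [Real.rpow_pos_of_pos hi (τ * α), Real.rpow_pos_of_pos hi ((1 - τ) * α)]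
  rw [← Real.rpow_le_rpow_iff (by positivity) hji.le hα, Real.mul_rpow (by positivity)
    (by positivity), Real.rpow_inv_rpow hβ hα.ne', Real.mul_rpow (by positivity) (by positivity),
    ← Real.rpow_mul hj, ← Real.rpow_mul hi.le]
  exact hpow

section Increments

variable {g p : ℕ → ℝ} {n : ℕ}

lemma sub_eq_sum_Ico_of_sub_eq (hp : ∀ t, t + 1 < n → p (t + 1) - p t = g t) {u v : ℕ}
    (huv : u ≤ v) (hv : v < n) : p v - p u = ∑ t ∈ Ico u v, g t := by
  induction v, huv using Nat.le_induction with
  | base => simp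
  | succ v huv ih =>
    rw [sum_Ico_succ_top huv, ← ih (by omega), ← hp v hv]
    ring

lemma sum_range_succ_le_two_mul (hg_nonneg : ∀ t, 0 ≤ g t) (hg : ∀ t, 2 * g t ≤ g (t + 1))
    (m : ℕ) : ∑ t ∈ range (m + 1), g t ≤ 2 * g m := by
  induction m with
  | zero => rw [sum_range_one]; linarith [hg_nonneg 0]
  | succ m ih => rw [sum_range_succ]; linarith [hg m]

lemma abs_sub_mem_Icc_of_doubling (hp : ∀ t, t + 1 < n → p (t + 1) - p t = g t)
    (hg_nonneg : ∀ t, 0 ≤ g t) (hg : ∀ t, 2 * g t ≤ g (t + 1)) {u v : ℕ} (huv : u ≠ v)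
    (hu : u < n) (hv : v < n) :
    |p u - p v| ∈ Set.Icc (g (max u v - 1)) (2 * g (max u v - 1)) := by
  wlog hlt : u < v generalizing u v
  · rw [abs_sub_comm, max_comm]; exact this huv.symm hv hu (by omega)
  have hsum := sub_eq_sum_Ico_of_sub_eq hp hlt.le hv
  have hlow : g (v - 1) ≤ p v - p u :=
    hsum ▸ single_le_sum (fun t _ => hg_nonneg t) (mem_Ico.mpr (by omega))
  have hupp : p v - p u ≤ 2 * g (v - 1) := by
    calc p v - p u ≤ ∑ t ∈ range (v - 1 + 1), g t := by
          rw [hsum]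
          refine sum_le_sum_of_subset_of_nonneg (fun t ht => ?_) (fun t _ _ => hg_nonneg t)
          simp only [mem_Ico, mem_range] at ht ⊢
          omega
      _ ≤ 2 * g (v - 1) := sum_range_succ_le_two_mul hg_nonneg hg _
  rw [abs_sub_comm, abs_of_nonneg (by linarith [hg_nonneg (v - 1)]), max_eq_right hlt.le]
  exact ⟨hlow, hupp⟩

end Increments

section DoublyExponentialChain

variable {τ' x : ℝ}

lemma rpow_pow_succ_rpow (hx : 0 ≤ x) (hτ' : τ' ≠ 0) (t : ℕ) :
    (x ^ ((1 / τ') ^ (t + 1))) ^ τ' = x ^ ((1 / τ') ^ t) := by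
  rw [← Real.rpow_mul hx, pow_succ, mul_assoc, one_div_mul_cancel hτ', mul_one]

lemma two_mul_rpow_pow_le_rpow_pow_succ (hx : 2 ≤ x) (hτ'0 : 0 < τ') (hτ' : τ' ≤ 1 / 2)
    (t : ℕ) : 2 * x ^ ((1 / τ') ^ t) ≤ x ^ ((1 / τ') ^ (t + 1)) := by
  have hρ : 2 ≤ 1 / τ' := by rw [le_div_iff₀ hτ'0]; linarith
  set y := x ^ ((1 / τ') ^ t)
  have hy : 2 ≤ y := by
    calc (2 : ℝ) ≤ x := hx
      _ = x ^ (1 : ℝ) := (Real.rpow_one x).symm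
      _ ≤ y := Real.rpow_le_rpow_of_exponent_le (by linarith) (one_le_pow₀ (by linarith))
  calc 2 * y ≤ y ^ (2 : ℝ) := by rw [Real.rpow_two]; nlinarith
    _ ≤ y ^ (1 / τ') := Real.rpow_le_rpow_of_exponent_le (by linarith) hρ
    _ = x ^ ((1 / τ') ^ (t + 1)) := by rw [← Real.rpow_mul (by linarith), pow_succ]

variable {n : ℕ} {p : ℕ → ℝ}

lemma abs_sub_lt_mul_rpow_mul_rpow {c e f : ℝ} (hτ'0 : 0 < τ') (hτ' : τ' ≤ 1 / 2) (hx : 2 ≤ x)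
    (hc : 2 < c * x ^ τ') (hp : ∀ t, t + 1 < n → p (t + 1) - p t = x ^ ((1 / τ') ^ t))
    (he : τ' ≤ e) (hf : τ' ≤ f) {a b u v : ℕ} (ha : a < n) (hba : b < a) (hua : u < a)
    (hva : v < a) (hbu : b ≠ u) (huv : u ≠ v) :
    |p u - p b| < c * (|p u - p v| ^ e * |p a - p b| ^ f) := by
  set g : ℕ → ℝ := fun t => x ^ ((1 / τ') ^ t)
  have hg_pos : ∀ t, 0 < g t := fun t => Real.rpow_pos_of_pos (by linarith) _
  have hg_double : ∀ t, 2 * g t ≤ g (t + 1) := two_mul_rpow_pow_le_rpow_pow_succ hx hτ'0 hτ'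
  have hg_mono : Monotone g := monotone_nat_of_le_succ fun t => by
    linarith [hg_double t, hg_pos t]
  have hdist := fun {u v : ℕ} (huv : u ≠ v) (hu : u < n) (hv : v < n) =>
    abs_sub_mem_Icc_of_doubling hp (fun t => (hg_pos t).le) hg_double huv hu hv
  have hg_ge : ∀ t, x ≤ g t := fun t => by
    simpa [g] using hg_mono (Nat.zero_le t)
  have hshort : x ≤ |p u - p v| := (hg_ge _).trans (hdist huv (by omega) (by omega)).1
  have hlong : g (a - 2 + 1) ≤ |p a - p b| := by
    have := (hdist (by omega : a ≠ b) ha (by omega)).1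
    rwa [max_eq_left hba.le, show a - 1 = a - 2 + 1 by omega] at this
  have hgap : |p u - p b| ≤ 2 * g (a - 2) := by
    have := (hdist hbu.symm (by omega) (by omega)).2
    linarith [hg_mono (show max u b - 1 ≤ a - 2 by omega)]
  have hshort_pow : x ^ τ' ≤ |p u - p v| ^ e :=
    (Real.rpow_le_rpow_of_exponent_le (by linarith) he).trans
      (Real.rpow_le_rpow (by linarith) hshort (by linarith))
  have hlong_pow : g (a - 2) ≤ |p a - p b| ^ f := by
    calc g (a - 2) = g (a - 2 + 1) ^ τ' := (rpow_pow_succ_rpow (by linarith) hτ'0.ne' _).symm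
      _ ≤ g (a - 2 + 1) ^ f :=
          Real.rpow_le_rpow_of_exponent_le (by linarith [hg_ge (a - 2 + 1)]) hf
      _ ≤ |p a - p b| ^ f := Real.rpow_le_rpow (hg_pos _).le hlong (by linarith)
  calc |p u - p b| ≤ 2 * g (a - 2) := hgap
    _ < c * x ^ τ' * g (a - 2) := by nlinarith [hg_pos (a - 2)]
    _ ≤ c * (|p u - p v| ^ e * |p a - p b| ^ f) := by
      rw [mul_assoc]
      gcongr
      exact (pos_of_mul_pos_left (two_pos.trans hc) (Real.rpow_nonneg (by linarith) _)).le

end DoublyExponentialChain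

lemma NodeDisjoint.symm {i j : Link} (h : NodeDisjoint i j) : NodeDisjoint j i :=
  ⟨h.1.symm, h.2.2.1.symm, h.2.1.symm, h.2.2.2.symm⟩

lemma not_pfeasible_chain_of_max_lt {α β τ x : ℝ} {n : ℕ} {p : ℕ → ℝ} (hα : 0 < α)
    (hβ : 0 ≤ β) (hτ : τ ∈ Set.Ioo (0 : ℝ) 1) (hx : 2 ≤ x)
    (hxβ : 2 < β ^ α⁻¹ * x ^ min τ (1 - τ))
    (hp : ∀ t, t + 1 < n → p (t + 1) - p t = x ^ ((1 / min τ (1 - τ)) ^ t)) {a b c d : ℕ}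
    (ha : a < n) (hb : b < n) (hab : emb (p a) ≠ emb (p b)) (hcd : emb (p c) ≠ emb (p d))
    (hdisj : NodeDisjoint (emb (p a), emb (p b)) (emb (p c), emb (p d)))
    (hmax : max c d < max a b) :
    ¬ PFeasible α β {(emb (p a), emb (p b)), (emb (p c), emb (p d))} (oblPower α τ) := by
  intro h
  obtain ⟨hτ0, hτ1⟩ := hτ
  have hτ'0 : 0 < min τ (1 - τ) := lt_min hτ0 (by linarith)
  have hτ' : min τ (1 - τ) ≤ 1 / 2 := by
    rw [min_le_iff]; by_contra! hgt; linarith [hgt.1, hgt.2]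
  have hidx {u v : ℕ} (h : emb (p u) ≠ emb (p v)) : u ≠ v := ne_of_apply_ne (emb ∘ p) h
  have hne : (emb (p a), emb (p b)) ≠ (emb (p c), emb (p d)) :=
    fun h => hdisj.1 (congrArg Prod.fst h)
  rcases lt_or_gt_of_ne (hidx hab) with hlt | hlt
  · have hsinr := PFeasible.oblPower_pair_le_dist hα hβ hne.symm (dist_pos.2 hcd)
      (dist_pos.2 hdisj.2.1) (by rwa [pair_comm] at h)
    have hchain := abs_sub_lt_mul_rpow_mul_rpow hτ'0 hτ' hx hxβ hp (min_le_right τ (1 - τ))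
      (min_le_left τ (1 - τ)) hb hlt (by omega) (by omega) (hidx hdisj.2.1) (hidx hcd).symm
    simp only [len, emb_dist] at hsinr
    rw [abs_sub_comm (p d), abs_sub_comm (p d), abs_sub_comm (p b), mul_comm] at hchain
    linarith
  · have hsinr := PFeasible.oblPower_pair_le_dist hα hβ hne (dist_pos.2 hab)
      (dist_pos.2 hdisj.2.2.1.symm) h
    have hchain := abs_sub_lt_mul_rpow_mul_rpow hτ'0 hτ' hx hxβ hp (min_le_left τ (1 - τ))
      (min_le_right τ (1 - τ)) ha hlt (by omega) (by omega) (hidx hdisj.2.2.1) (hidx hcd)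
    simp only [len, emb_dist] at hsinr
    linarith

/-- On the doubly-exponential chain of points on the line (gaps
`x^{(1/τ')^{t-1}}` where `τ' = min{τ, 1-τ}`), for `x` large enough no two node-disjoint links
with endpoints among the chain points can be simultaneously `P_τ`-feasible. -/
theorem doubly_exponential_chain_no_parallel_links (α β τ : ℝ)
    (hα : 2 < α) (hβ : 0 < β) (hτ : τ ∈ Set.Ioo (0 : ℝ) 1) :
    ∃ x₀ : ℝ, 0 < x₀ ∧ ∀ x : ℝ, x₀ ≤ x → ∀ n : ℕ, 2 ≤ n →
      ∀ p : ℕ → ℝ,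
        (∀ t : ℕ, t + 1 < n → p (t + 1) - p t = x ^ ((1 / min τ (1 - τ)) ^ t)) →
        ∀ i j : Link,
          i.1 ∈ (Finset.range n).image (fun t => emb (p t)) →
          i.2 ∈ (Finset.range n).image (fun t => emb (p t)) →
          j.1 ∈ (Finset.range n).image (fun t => emb (p t)) →
          j.2 ∈ (Finset.range n).image (fun t => emb (p t)) →
          i.1 ≠ i.2 → j.1 ≠ j.2 → NodeDisjoint i j →
          ¬ PFeasible α β {i, j} (oblPower α τ) := by
  have hτ'0 : 0 < min τ (1 - τ) := lt_min hτ.1 (by linarith [hτ.2])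
  have hlarge : ∀ᶠ x in Filter.atTop, 2 < β ^ α⁻¹ * x ^ min τ (1 - τ) ∧ 2 ≤ x :=
    (((tendsto_rpow_atTop hτ'0).const_mul_atTop (Real.rpow_pos_of_pos hβ α⁻¹)).eventually_gt_atTop
      2).and (Filter.eventually_ge_atTop 2)
  obtain ⟨x₀, hx₀⟩ := Filter.eventually_atTop.1 hlarge
  refine ⟨max x₀ 1, by positivity, ?_⟩
  intro x hx n _ p hp ⟨i₁, i₂⟩ ⟨j₁, j₂⟩ hi₁ hi₂ hj₁ hj₂ hi hj hdisj
  obtain ⟨hxβ, hx⟩ := hx₀ x (le_of_max_le_left hx)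
  simp only [mem_image, mem_range] at hi₁ hi₂ hj₁ hj₂
  obtain ⟨a, ha, rfl⟩ := hi₁
  obtain ⟨b, hb, rfl⟩ := hi₂
  obtain ⟨c, hc, rfl⟩ := hj₁
  obtain ⟨d, hd, rfl⟩ := hj₂
  have hmax : max c d ≠ max a b := by
    have hidx {u v : ℕ} (h : emb (p u) ≠ emb (p v)) : u ≠ v := ne_of_apply_ne (emb ∘ p) h
    have := hidx hdisj.1; have := hidx hdisj.2.1; have := hidx hdisj.2.2.1
    have := hidx hdisj.2.2.2
    omega
  rcases lt_or_gt_of_ne hmax with hmax | hmax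
  · exact not_pfeasible_chain_of_max_lt (by linarith) hβ.le hτ hx hxβ hp ha hb hi hj hdisj hmax
  · rw [pair_comm]
    exact not_pfeasible_chain_of_max_lt (by linarith) hβ.le hτ hx hxβ hp hc hd hj hi hdisj.symm hmax
end
end

section
/- Let α > 2 and set the SINR threshold β = 3^α. There exists a constant C depending only on α such that: for every finite set S of links in the Euclidean plane that is feasible (P-feasible for some power assignment P, with threshold 3^α), every link i ∈ S satisfies Σ_{j ∈ S, j ≠ i, l_j ≤ l_i} min{1, l_j^α / d(i,j)^α} ≤ C. -/
/-!
Split the links `j` according to whether `d(i, j) ≤ l_i`.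

For near links the triangle inequality gives `min {1, l_j / d(i, j)} ≤ 6 l_j l_i / (d_ij d_ji)`,
and multiplying the SINR condition of `j` against the single interferer `i` with the SINR
condition of `i` shows `β² Σ_j (l_j l_i / (d_ij d_ji))^α ≤ 1`.

Far links are grouped by the dyadic scales `2^k ≤ d(i, j) / l_i` and `2^m ≤ l_i / l_j`; each
contributes at most `2^(-(k+m)α)`. For two links of comparable length `L` the same product of SINR
conditions with `β = 3^α` gives `d_jk d_kj ≥ 9 l_j l_k`, which forces their receivers to be
`L`-separated, so a volume argument puts `O(4^(k+m))` links in a group. The resulting double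
geometric series converges because `α > 2`.
-/

noncomputable section

open scoped BigOperators

open scoped ENNReal Finset
open Metric MeasureTheory Module

theorem card_le_of_forall_le_dist {E : Type*} [NormedAddCommGroup E] [NormedSpace ℝ E]
    [FiniteDimensional ℝ E] {s : Finset E} {c : E} {R L : ℝ} (hR : 0 ≤ R) (hL : 0 < L)
    (hsc : ∀ p ∈ s, dist p c ≤ R) (hs : ∀ p ∈ s, ∀ q ∈ s, p ≠ q → L ≤ dist p q) :
    (#s : ℝ) ≤ ((2 * R + L) / L) ^ finrank ℝ E := by
  borelize E
  let μ : Measure E := Measure.addHaar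
  have hδ : 0 < L / 2 := half_pos hL
  have hρ : 0 < R + L / 2 := by linarith
  have hdisj : (s : Set E).PairwiseDisjoint fun p => ball p (L / 2) := fun p hp q hq hpq =>
    ball_disjoint_ball (by linarith [hs p hp q hq hpq])
  have hsub : ⋃ p ∈ s, ball p (L / 2) ⊆ ball c (R + L / 2) :=
    Set.iUnion₂_subset fun p hp => ball_subset_ball' (by linarith [hsc p hp])
  have hvol : (#s : ℝ≥0∞) * ENNReal.ofReal ((L / 2) ^ finrank ℝ E) * μ (ball 0 1) ≤
      ENNReal.ofReal ((R + L / 2) ^ finrank ℝ E) * μ (ball 0 1) :=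
    calc (#s : ℝ≥0∞) * ENNReal.ofReal ((L / 2) ^ finrank ℝ E) * μ (ball 0 1)
        = μ (⋃ p ∈ s, ball p (L / 2)) := by
          rw [measure_biUnion_finset hdisj fun p _ => measurableSet_ball]
          simp only [μ.addHaar_ball_of_pos _ hδ, Finset.sum_const, nsmul_eq_mul, mul_assoc]
      _ ≤ μ (ball c (R + L / 2)) := measure_mono hsub
      _ = ENNReal.ofReal ((R + L / 2) ^ finrank ℝ E) * μ (ball 0 1) :=
          μ.addHaar_ball_of_pos _ hρ
  have hcard : (#s : ℝ≥0∞) * ENNReal.ofReal ((L / 2) ^ finrank ℝ E) ≤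
      ENNReal.ofReal ((R + L / 2) ^ finrank ℝ E) :=
    (ENNReal.mul_le_mul_iff_left (measure_ball_pos _ _ zero_lt_one).ne'
      measure_ball_lt_top.ne).1 hvol
  have hreal : (#s : ℝ) * (L / 2) ^ finrank ℝ E ≤ (R + L / 2) ^ finrank ℝ E := by
    have := ENNReal.toReal_mono ENNReal.ofReal_ne_top hcard
    rwa [ENNReal.toReal_mul, ENNReal.toReal_ofReal (by positivity),
      ENNReal.toReal_ofReal (by positivity), ENNReal.toReal_natCast] at this
  rw [show (2 * R + L) / L = (R + L / 2) / (L / 2) by field_simp, div_pow,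
    le_div_iff₀ (by positivity)]
  exact hreal

lemma two_pow_floor_logb_le {x : ℝ} (hx : 1 ≤ x) :
    2 ^ ⌊Real.logb 2 x⌋₊ ≤ x ∧ x < 2 ^ (⌊Real.logb 2 x⌋₊ + 1) := by
  have hx₀ : 0 < x := by linarith
  have hlog : 0 ≤ Real.logb 2 x := Real.logb_nonneg one_lt_two hx
  constructor
  · rw [← Real.rpow_natCast, ← Real.le_logb_iff_rpow_le one_lt_two hx₀]
    exact Nat.floor_le hlog
  · rw [← Real.rpow_natCast, ← Real.logb_lt_iff_lt_rpow one_lt_two hx₀]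
    push_cast
    exact Nat.lt_floor_add_one _

lemma sum_pow_mul_pow_le {q : ℝ} (hq₀ : 0 ≤ q) (hq₁ : q < 1) (t : Finset (ℕ × ℕ)) :
    ∑ p ∈ t, q ^ p.1 * q ^ p.2 ≤ 1 / (1 - q) ^ 2 := by
  have hgeom := summable_geometric_of_lt_one hq₀ hq₁
  have hnorm : Summable fun n => ‖q ^ n‖ := by simpa [abs_of_nonneg hq₀] using hgeom
  calc ∑ p ∈ t, q ^ p.1 * q ^ p.2
      ≤ ∑' p : ℕ × ℕ, q ^ p.1 * q ^ p.2 :=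
        (hgeom.mul_of_nonneg hgeom (fun n => by positivity) fun n => by positivity).sum_le_tsum
          t fun p _ => by positivity
    _ = 1 / (1 - q) ^ 2 := by
        rw [← tsum_mul_tsum_of_summable_norm hnorm hnorm, tsum_geometric_of_lt_one hq₀ hq₁]
        field_simp

lemma sum_le_of_card_fiber_le {ι : Type*} (s : Finset ι) (f : ι → ℕ × ℕ) (w : ι → ℝ)
    {A r : ℝ} (hA : 0 ≤ A) (hr : 0 ≤ r) (hr₄ : 4 * r < 1)
    (hw : ∀ j ∈ s, w j ≤ r ^ ((f j).1 + (f j).2))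
    (hcard : ∀ p : ℕ × ℕ, (#{j ∈ s | f j = p} : ℝ) ≤ A * 4 ^ (p.1 + p.2)) :
    ∑ j ∈ s, w j ≤ A / (1 - 4 * r) ^ 2 := by
  have hfiber : ∀ p ∈ s.image f,
      ∑ j ∈ s with f j = p, w j ≤ A * ((4 * r) ^ p.1 * (4 * r) ^ p.2) := fun p _ =>
    calc ∑ j ∈ s with f j = p, w j
        ≤ #{j ∈ s | f j = p} • r ^ (p.1 + p.2) :=
          Finset.sum_le_card_nsmul _ _ _ fun j hj => by
            obtain ⟨hjs, rfl⟩ := Finset.mem_filter.1 hj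
            exact hw j hjs
      _ ≤ A * 4 ^ (p.1 + p.2) * r ^ (p.1 + p.2) := by
          rw [nsmul_eq_mul]
          gcongr
          exact hcard p
      _ = A * ((4 * r) ^ p.1 * (4 * r) ^ p.2) := by ring
  calc ∑ j ∈ s, w j
      = ∑ p ∈ s.image f, ∑ j ∈ s with f j = p, w j :=
        (Finset.sum_fiberwise_of_maps_to (fun j hj => Finset.mem_image_of_mem f hj) w).symm
    _ ≤ ∑ p ∈ s.image f, A * ((4 * r) ^ p.1 * (4 * r) ^ p.2) := Finset.sum_le_sum hfiber
    _ ≤ A * (1 / (1 - 4 * r) ^ 2) := by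
        rw [← Finset.mul_sum]
        exact mul_le_mul_of_nonneg_left (sum_pow_mul_pow_le (by positivity) hr₄ _) hA
    _ = A / (1 - 4 * r) ^ 2 := by ring

lemma min_one_rpow {x α : ℝ} (hx : 0 ≤ x) (hα : 0 ≤ α) : min 1 (x ^ α) = min 1 x ^ α := by
  rcases le_total x 1 with h | h
  · rw [min_eq_right h, min_eq_right (Real.rpow_le_one hx h hα)]
  · rw [min_eq_left h, min_eq_left (Real.one_le_rpow h hα), Real.one_rpow]

section Geometry

variable {i j : Link} {a b : Pt}

lemma len_nonneg (i : Link) : 0 ≤ len i := dist_nonneg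

lemma dd_nonneg (i j : Link) : 0 ≤ dd i j := by
  unfold dd; positivity

lemma dd_le_dist_fst_snd (i j : Link) : dd i j ≤ dist i.1 j.2 :=
  (min_le_left _ _).trans (min_le_right _ _)

lemma dd_le_dist_snd_fst (i j : Link) : dd i j ≤ dist j.1 i.2 := by
  rw [dist_comm]
  exact (min_le_right _ _).trans (min_le_left _ _)

lemma exists_dd_eq_dist (i j : Link) :
    ∃ a ∈ ({i.1, i.2} : Set Pt), ∃ b ∈ ({j.1, j.2} : Set Pt), dd i j = dist a b := by
  unfold dd
  rcases min_choice (min (dist i.1 j.1) (dist i.1 j.2)) (min (dist i.2 j.1) (dist i.2 j.2))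
    with h | h <;> rw [h]
  · rcases min_choice (dist i.1 j.1) (dist i.1 j.2) with h' | h' <;> rw [h'] <;>
      exact ⟨_, by simp, _, by simp, rfl⟩
  · rcases min_choice (dist i.2 j.1) (dist i.2 j.2) with h' | h' <;> rw [h'] <;>
      exact ⟨_, by simp, _, by simp, rfl⟩

lemma dist_le_len (ha : a ∈ ({i.1, i.2} : Set Pt)) (hb : b ∈ ({i.1, i.2} : Set Pt)) :
    dist a b ≤ len i := by
  rcases ha with rfl | rfl <;> rcases hb with rfl | rfl <;>
    simp [len, dist_comm]

lemma dist_le_dd_add_len_add_len (ha : a ∈ ({i.1, i.2} : Set Pt)) (hb : b ∈ ({j.1, j.2} : Set Pt)) :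
    dist a b ≤ dd i j + len i + len j := by
  obtain ⟨a', ha', b', hb', h⟩ := exists_dd_eq_dist i j
  linarith [dist_triangle4 a a' b' b, dist_le_len ha ha', dist_le_len hb' hb]

lemma min_dist_le_dd_add_len (i j : Link) :
    min (dist i.1 j.2) (dist j.1 i.2) ≤ dd i j + len j := by
  obtain ⟨a, rfl | rfl, b, hb, h⟩ := exists_dd_eq_dist i j
  · refine (min_le_left _ _).trans ?_
    linarith [dist_triangle i.1 b j.2, dist_le_len hb (by simp : j.2 ∈ ({j.1, j.2} : Set Pt))]
  · refine (min_le_right _ _).trans ?_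
    linarith [dist_triangle j.1 b i.2, dist_comm b i.2,
      dist_le_len (by simp : j.1 ∈ ({j.1, j.2} : Set Pt)) hb]

lemma dist_mul_dist_le (hd : dd i j ≤ len i) (hj : len j ≤ len i) :
    dist i.1 j.2 * dist j.1 i.2 ≤ 6 * (max (dd i j) (len j) * len i) := by
  have h₁ : dist i.1 j.2 ≤ 3 * len i := by
    linarith [dist_le_dd_add_len_add_len (i := i) (j := j) (a := i.1) (b := j.2)
      (by simp) (by simp)]
  have h₂ : dist j.1 i.2 ≤ 3 * len i := by
    linarith [dist_le_dd_add_len_add_len (i := i) (j := j) (a := i.2) (b := j.1)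
      (by simp) (by simp), dist_comm i.2 j.1]
  have hmin : min (dist i.1 j.2) (dist j.1 i.2) ≤ 2 * max (dd i j) (len j) := by
    linarith [min_dist_le_dd_add_len i j, le_max_left (dd i j) (len j),
      le_max_right (dd i j) (len j)]
  have hM : 0 ≤ 2 * max (dd i j) (len j) := by
    linarith [le_max_right (dd i j) (len j), len_nonneg j]
  rcases min_le_iff.1 hmin with h | h
  · nlinarith [mul_le_mul h h₂ dist_nonneg hM]
  · nlinarith [mul_le_mul h₁ h dist_nonneg (by linarith [len_nonneg i])]

lemma min_one_div_dd_le (hd : dd i j ≤ len i) (hj : len j ≤ len i) :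
    min 1 (len j / dd i j) ≤ 6 * (len j / dist i.1 j.2 * (len i / dist j.1 i.2)) := by
  rcases (dd_nonneg i j).eq_or_lt with h0 | hpos
  · -- `x / 0 = 0`: links sharing an endpoint contribute nothing.
    rw [← h0, div_zero, min_eq_right zero_le_one]
    have := len_nonneg i
    have := len_nonneg j
    positivity
  set M := max (dd i j) (len j)
  have hM : 0 < M := hpos.trans_le (le_max_left _ _)
  have h₁ := hpos.trans_le (dd_le_dist_fst_snd i j)
  have h₂ := hpos.trans_le (dd_le_dist_snd_fst i j)
  have hmin : min 1 (len j / dd i j) ≤ len j / M := by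
    rcases le_total (dd i j) (len j) with h | h
    · rw [show M = len j from max_eq_right h, div_self (hpos.trans_le h).ne']
      exact min_le_left _ _
    · rw [show M = dd i j from max_eq_left h]
      exact min_le_right _ _
  refine hmin.trans ?_
  rw [div_mul_div_comm, mul_div_assoc', div_le_div_iff₀ hM (by positivity)]
  nlinarith [dist_mul_dist_le hd hj, len_nonneg j]

def dyadicClass (i j : Link) : ℕ × ℕ :=
  (⌊Real.logb 2 (dd i j / len i)⌋₊, ⌊Real.logb 2 (len i / len j)⌋₊)

lemma dyadicClass_spec (hlj : 0 < len j) (hji : len j ≤ len i) (hd : len i < dd i j) :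
    2 ^ (dyadicClass i j).1 * len i ≤ dd i j ∧ dd i j < 2 ^ ((dyadicClass i j).1 + 1) * len i ∧
      2 ^ (dyadicClass i j).2 * len j ≤ len i ∧
      len i < 2 ^ ((dyadicClass i j).2 + 1) * len j := by
  have hli := hlj.trans_le hji
  obtain ⟨hk₁, hk₂⟩ := two_pow_floor_logb_le ((one_le_div hli).2 hd.le)
  obtain ⟨hm₁, hm₂⟩ := two_pow_floor_logb_le ((one_le_div hlj).2 hji)
  rw [le_div_iff₀ hli] at hk₁
  rw [div_lt_iff₀ hli] at hk₂
  rw [le_div_iff₀ hlj] at hm₁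
  rw [div_lt_iff₀ hlj] at hm₂
  exact ⟨hk₁, hk₂, hm₁, hm₂⟩

lemma min_one_rpow_le_of_dyadicClass {α : ℝ} (hα : 0 ≤ α) (hlj : 0 < len j)
    (hji : len j ≤ len i) (hd : len i < dd i j) :
    min 1 (len j ^ α / dd i j ^ α) ≤
      ((1 / 2) ^ α) ^ ((dyadicClass i j).1 + (dyadicClass i j).2) := by
  obtain ⟨hk, -, hm, -⟩ := dyadicClass_spec hlj hji hd
  have hdpos : 0 < dd i j := (hlj.trans_le hji).trans hd
  have hratio : len j / dd i j ≤ (1 / 2) ^ ((dyadicClass i j).1 + (dyadicClass i j).2) := by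
    rw [one_div_pow, div_le_div_iff₀ hdpos (by positivity), pow_add]
    nlinarith [pow_pos (two_pos : (0 : ℝ) < 2) (dyadicClass i j).1]
  rw [Real.rpow_pow_comm (by norm_num), ← Real.div_rpow (len_nonneg j) hdpos.le]
  exact (min_le_right _ _).trans (Real.rpow_le_rpow (by positivity) hratio hα)

lemma len_mem_Ioc_of_dyadicClass (hlj : 0 < len j) (hji : len j ≤ len i) (hd : len i < dd i j) :
    len j ∈ Set.Ioc (len i / 2 ^ ((dyadicClass i j).2 + 1))
      (2 * (len i / 2 ^ ((dyadicClass i j).2 + 1))) := by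
  obtain ⟨-, -, hm₁, hm₂⟩ := dyadicClass_spec hlj hji hd
  constructor
  · rwa [div_lt_iff₀ (by positivity), mul_comm]
  · have hhalf : 2 * (len i / 2 ^ ((dyadicClass i j).2 + 1)) =
        len i / 2 ^ (dyadicClass i j).2 := by
      rw [pow_succ]; field_simp
    rwa [hhalf, le_div_iff₀ (by positivity), mul_comm]

lemma dist_snd_le_of_dyadicClass (hlj : 0 < len j) (hji : len j ≤ len i) (hd : len i < dd i j) :
    dist j.2 i.2 ≤ 2 ^ ((dyadicClass i j).1 + 2) * len i := by
  obtain ⟨-, hk, -, -⟩ := dyadicClass_spec hlj hji hd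
  have h2 : (2 : ℝ) ≤ 2 ^ ((dyadicClass i j).1 + 1) :=
    le_self_pow₀ one_le_two (Nat.succ_ne_zero _)
  rw [dist_comm, pow_succ]
  nlinarith [dist_le_dd_add_len_add_len (i := i) (j := j) (a := i.2) (b := j.2) (by simp) (by simp),
    len_nonneg i]

end Geometry

namespace PFeasible

variable {α β : ℝ} {S : Finset Link} {P : Link → ℝ} {i j : Link}

lemma sum_le_one (hP : PFeasible α β S P) (hi : i ∈ S) (hli : 0 < len i) :
    β * ∑ j ∈ S.erase i, P j / P i * (len i / dist j.1 i.2) ^ α ≤ 1 := by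
  have hPi := hP.1 i hi
  have hli' : 0 < len i ^ α := Real.rpow_pos_of_pos hli α
  calc β * ∑ j ∈ S.erase i, P j / P i * (len i / dist j.1 i.2) ^ α
      = len i ^ α / P i * (β * ∑ j ∈ S.erase i, P j / dist j.1 i.2 ^ α) := by
        simp only [Finset.mul_sum]
        refine Finset.sum_congr rfl fun j _ => ?_
        rw [Real.div_rpow hli.le dist_nonneg]
        ring
    _ ≤ len i ^ α / P i * (P i / len i ^ α) := by
        gcongr
        exact hP.2 i hi
    _ = 1 := by field_simp

lemma mul_rpow_le_div (hβ : 0 ≤ β) (hP : PFeasible α β S P) (hi : i ∈ S) (hj : j ∈ S)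
    (hij : i ≠ j) (hlj : 0 < len j) :
    β * (len j / dist i.1 j.2) ^ α ≤ P j / P i := by
  have hPi := hP.1 i hi
  have hPj := hP.1 j hj
  have hterm : β * (P i / P j * (len j / dist i.1 j.2) ^ α) ≤ 1 := by
    refine le_trans ?_ (hP.sum_le_one hj hlj)
    gcongr
    refine Finset.single_le_sum (f := fun k => P k / P j * (len j / dist k.1 j.2) ^ α)
      (fun k hk => ?_) (Finset.mem_erase.2 ⟨hij, hi⟩)
    have := hP.1 k (Finset.mem_of_mem_erase hk)
    have := len_nonneg j
    positivity
  calc β * (len j / dist i.1 j.2) ^ α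
      = P j / P i * (β * (P i / P j * (len j / dist i.1 j.2) ^ α)) := by
        field_simp
    _ ≤ P j / P i := mul_le_of_le_one_right (by positivity) hterm

lemma sq_mul_sum_le_one (hβ : 0 ≤ β) (hP : PFeasible α β S P)
    (hlen : ∀ j ∈ S, 0 < len j) (hi : i ∈ S) :
    β ^ 2 * ∑ j ∈ S.erase i, (len j / dist i.1 j.2 * (len i / dist j.1 i.2)) ^ α ≤ 1 := by
  refine le_trans ?_ (hP.sum_le_one hi (hlen i hi))
  simp only [Finset.mul_sum]
  refine Finset.sum_le_sum fun j hj => ?_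
  obtain ⟨hji, hjS⟩ := Finset.mem_erase.1 hj
  have := len_nonneg i
  have := len_nonneg j
  rw [Real.mul_rpow (by positivity) (by positivity)]
  calc β ^ 2 * ((len j / dist i.1 j.2) ^ α * (len i / dist j.1 i.2) ^ α)
      = β * (len j / dist i.1 j.2) ^ α * (β * (len i / dist j.1 i.2) ^ α) := by ring
    _ ≤ P j / P i * (β * (len i / dist j.1 i.2) ^ α) := by
        gcongr
        exact hP.mul_rpow_le_div hβ hi hjS (Ne.symm hji) (hlen j hjS)
    _ = β * (P j / P i * (len i / dist j.1 i.2) ^ α) := by ring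

lemma nine_mul_le_dist_mul_dist (hα : 0 < α) (hP : PFeasible α (3 ^ α) S P)
    (hi : i ∈ S) (hj : j ∈ S) (hij : i ≠ j) (hli : 0 < len i) (hlj : 0 < len j)
    (h₁ : 0 < dist i.1 j.2) (h₂ : 0 < dist j.1 i.2) :
    9 * (len i * len j) ≤ dist i.1 j.2 * dist j.1 i.2 := by
  have hPi := hP.1 i hi
  have hPj := hP.1 j hj
  have hx : 0 ≤ len j / dist i.1 j.2 := div_nonneg hlj.le h₁.le
  have hy : 0 ≤ len i / dist j.1 i.2 := div_nonneg hli.le h₂.le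
  have hpow : (9 * (len j / dist i.1 j.2 * (len i / dist j.1 i.2))) ^ α ≤ 1 :=
    calc (9 * (len j / dist i.1 j.2 * (len i / dist j.1 i.2))) ^ α
        = (3 * (len j / dist i.1 j.2)) ^ α * (3 * (len i / dist j.1 i.2)) ^ α := by
          rw [← Real.mul_rpow (by positivity) (by positivity)]
          ring_nf
      _ = 3 ^ α * (len j / dist i.1 j.2) ^ α * (3 ^ α * (len i / dist j.1 i.2) ^ α) := by
          rw [Real.mul_rpow (by norm_num) hx, Real.mul_rpow (by norm_num) hy]
      _ ≤ P j / P i * (P i / P j) :=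
          mul_le_mul (hP.mul_rpow_le_div (by positivity) hi hj hij hlj)
            (hP.mul_rpow_le_div (by positivity) hj hi (Ne.symm hij) hli) (by positivity)
            (by positivity)
      _ = 1 := by field_simp
  have h9 : 9 * (len j / dist i.1 j.2 * (len i / dist j.1 i.2)) ≤ 1 := by
    by_contra! h
    exact (Real.one_lt_rpow h hα).not_ge hpow
  rw [div_mul_div_comm, mul_div_assoc', div_le_one (by positivity)] at h9
  linarith

lemma le_dist_snd_of_len_mem_Ioc (hα : 0 < α) (hP : PFeasible α (3 ^ α) S P) {k : Link}
    (hj : j ∈ S) (hk : k ∈ S) (hjk : j ≠ k) {L : ℝ}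
    (hlj : len j ∈ Set.Ioc L (2 * L)) (hlk : len k ∈ Set.Ioc L (2 * L)) :
    L ≤ dist j.2 k.2 := by
  obtain ⟨hLj, hjL⟩ := hlj
  obtain ⟨hLk, hkL⟩ := hlk
  have t₁ := dist_triangle j.1 j.2 k.2
  have t₂ := dist_triangle k.1 k.2 j.2
  have e := dist_comm k.2 j.2
  rcases (dist_nonneg : 0 ≤ dist j.1 k.2).eq_or_lt with h₁ | h₁
  · linarith [dist_triangle j.1 k.2 j.2, dist_comm j.1 j.2, show len j = dist j.1 j.2 from rfl]
  rcases (dist_nonneg : 0 ≤ dist k.1 j.2).eq_or_lt with h₂ | h₂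
  · linarith [dist_triangle k.1 j.2 k.2, show len k = dist k.1 k.2 from rfl]
  have h9 := hP.nine_mul_le_dist_mul_dist hα hj hk hjk (by linarith) (by linarith) h₁ h₂
  by_contra! hx
  have hd₁ : dist j.1 k.2 < 3 * L := by unfold len at hjL; linarith
  have hd₂ : dist k.1 j.2 < 3 * L := by unfold len at hkL; linarith
  nlinarith [mul_lt_mul'' hd₁ hd₂ h₁.le h₂.le]

lemma card_le_of_len_mem_Ioc (hα : 0 < α) (hP : PFeasible α (3 ^ α) S P) {G : Finset Link}
    (hGS : G ⊆ S) {c : Pt} {L R : ℝ} (hR : 0 ≤ R) (hL : 0 < L)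
    (hlen : ∀ j ∈ G, len j ∈ Set.Ioc L (2 * L))
    (hc : ∀ j ∈ G, dist j.2 c ≤ R) :
    (#G : ℝ) ≤ ((2 * R + L) / L) ^ 2 := by
  have hsep : ∀ j ∈ G, ∀ k ∈ G, j ≠ k → L ≤ dist j.2 k.2 := fun j hj k hk hjk =>
    hP.le_dist_snd_of_len_mem_Ioc hα (hGS hj) (hGS hk) hjk (hlen j hj) (hlen k hk)
  have hinj : Set.InjOn Prod.snd (G : Set Link) := fun j hj k hk hjk => by
    by_contra hne
    have := hsep j hj k hk hne
    rw [hjk, dist_self] at this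
    linarith
  rw [← Finset.card_image_of_injOn hinj]
  simpa only [finrank_euclideanSpace_fin] using
    card_le_of_forall_le_dist (s := G.image Prod.snd) hR hL
      (by simpa only [Finset.mem_image, forall_exists_index, and_imp,
        forall_apply_eq_imp_iff₂] using hc)
      (by
        simp only [Finset.mem_image, forall_exists_index, and_imp, forall_apply_eq_imp_iff₂]
        exact fun j hj k hk hne => hsep j hj k hk fun h => hne (h ▸ rfl))

lemma sum_near_le (hα : 0 ≤ α) (hβ : 1 ≤ β) (hP : PFeasible α β S P)
    (hlen : ∀ j ∈ S, 0 < len j) (hi : i ∈ S) {T : Finset Link} (hTS : T ⊆ S.erase i)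
    (hT : ∀ j ∈ T, len j ≤ len i ∧ dd i j ≤ len i) :
    ∑ j ∈ T, min 1 (len j ^ α / dd i j ^ α) ≤ 6 ^ α := by
  have hnonneg : ∀ j, 0 ≤ (len j / dist i.1 j.2 * (len i / dist j.1 i.2)) ^ α := fun j => by
    have := len_nonneg i
    have := len_nonneg j
    positivity
  have hsum : ∑ j ∈ S.erase i, (len j / dist i.1 j.2 * (len i / dist j.1 i.2)) ^ α ≤ 1 :=
    (le_mul_of_one_le_left (Finset.sum_nonneg fun j _ => hnonneg j) (one_le_pow₀ hβ)).trans
      (hP.sq_mul_sum_le_one (by linarith) hlen hi)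
  calc ∑ j ∈ T, min 1 (len j ^ α / dd i j ^ α)
      ≤ ∑ j ∈ T, 6 ^ α * (len j / dist i.1 j.2 * (len i / dist j.1 i.2)) ^ α := by
        refine Finset.sum_le_sum fun j hj => ?_
        rw [← Real.div_rpow (len_nonneg j) (dd_nonneg i j),
          min_one_rpow (div_nonneg (len_nonneg j) (dd_nonneg i j)) hα,
          ← Real.mul_rpow (by norm_num) (by have := len_nonneg i; have := len_nonneg j; positivity)]
        exact Real.rpow_le_rpow (le_min zero_le_one (div_nonneg (len_nonneg j) (dd_nonneg i j)))
          (min_one_div_dd_le (hT j hj).2 (hT j hj).1) hα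
    _ = 6 ^ α * ∑ j ∈ T, (len j / dist i.1 j.2 * (len i / dist j.1 i.2)) ^ α :=
        (Finset.mul_sum _ _ _).symm
    _ ≤ 6 ^ α * 1 := by
        gcongr
        exact (Finset.sum_le_sum_of_subset_of_nonneg hTS fun j _ _ => hnonneg j).trans hsum
    _ = 6 ^ α := mul_one _

lemma sum_far_le (hα : 2 < α) (hP : PFeasible α (3 ^ α) S P) (hlen : ∀ j ∈ S, 0 < len j)
    (hli : 0 < len i) {T : Finset Link} (hTS : T ⊆ S)
    (hT : ∀ j ∈ T, len j ≤ len i ∧ len i < dd i j) :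
    ∑ j ∈ T, min 1 (len j ^ α / dd i j ^ α) ≤ 4 ^ 5 / (1 - 4 * (1 / 2) ^ α) ^ 2 := by
  have hr : 4 * (1 / 2 : ℝ) ^ α < 1 := by
    have : (1 / 2 : ℝ) ^ α < (1 / 2) ^ (2 : ℝ) :=
      Real.rpow_lt_rpow_of_exponent_gt (by norm_num) (by norm_num) hα
    norm_num at this ⊢
    linarith
  refine sum_le_of_card_fiber_le T (dyadicClass i) _ (by norm_num) (by positivity) hr
    (fun j hj => min_one_rpow_le_of_dyadicClass (by linarith) (hlen j (hTS hj)) (hT j hj).1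
      (hT j hj).2) fun ⟨k, m⟩ => ?_
  have hL : 0 < len i / 2 ^ (m + 1) := by positivity
  calc (#{j ∈ T | dyadicClass i j = (k, m)} : ℝ)
      ≤ ((2 * (2 ^ (k + 2) * len i) + len i / 2 ^ (m + 1)) / (len i / 2 ^ (m + 1))) ^ 2 := by
        refine hP.card_le_of_len_mem_Ioc (by linarith) ((Finset.filter_subset _ _).trans hTS)
          (c := i.2) (by positivity) hL (fun j hj => ?_) fun j hj => ?_ <;>
        obtain ⟨hjT, hjc⟩ := Finset.mem_filter.1 hj <;>
        obtain ⟨hji, hd⟩ := hT j hjT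
        · simpa [hjc] using len_mem_Ioc_of_dyadicClass (hlen j (hTS hjT)) hji hd
        · simpa [hjc] using dist_snd_le_of_dyadicClass (hlen j (hTS hjT)) hji hd
    _ = (2 ^ (k + m + 4) + 1) ^ 2 := by
        congr 1
        field_simp
        ring
    _ ≤ (2 ^ (k + m + 5)) ^ 2 := by
        gcongr
        rw [show (2 : ℝ) ^ (k + m + 5) = 2 * 2 ^ (k + m + 4) by ring]
        linarith [one_le_pow₀ (one_le_two : (1 : ℝ) ≤ 2) (n := k + m + 4)]
    _ = 4 ^ 5 * 4 ^ (k + m) := by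
        rw [← pow_mul, show (4 : ℝ) = 2 ^ 2 by norm_num, ← pow_mul, ← pow_mul, ← pow_add]
        ring_nf

end PFeasible

/-- (Necessary condition for feasibility, threshold `β = 3^α`.)
In any feasible set, the total capped interference on a link from the not-longer links is
bounded by a constant depending only on `α`. -/
theorem feasible_implies_bounded_in_interference (α : ℝ) (hα : 2 < α) :
    ∃ C : ℝ, ∀ S : Finset Link, (∀ i ∈ S, i.1 ≠ i.2) →
      Feasible α (3 ^ α) S →
      ∀ i ∈ S,
        ∑ j ∈ S.filter (fun j => j ≠ i ∧ len j ≤ len i),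
          min 1 (len j ^ α / dd i j ^ α) ≤ C := by
  refine ⟨6 ^ α + 4 ^ 5 / (1 - 4 * (1 / 2) ^ α) ^ 2, fun S hS ⟨P, hP⟩ i hi => ?_⟩
  have hlen : ∀ j ∈ S, 0 < len j := fun j hj => dist_pos.2 (hS j hj)
  rw [← Finset.sum_filter_add_sum_filter_not _ (fun j => dd i j ≤ len i)]
  refine add_le_add
    (hP.sum_near_le (by linarith) (Real.one_le_rpow (by norm_num) (by linarith)) hlen hi ?_ ?_)
    (hP.sum_far_le hα hlen (hlen i hi) ?_ ?_)
  · intro j hj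
    simp only [Finset.mem_filter] at hj
    exact Finset.mem_erase.2 ⟨hj.1.2.1, hj.1.1⟩
  · intro j hj
    simp only [Finset.mem_filter] at hj
    exact ⟨hj.1.2.2, hj.2⟩
  · exact (Finset.filter_subset _ _).trans (Finset.filter_subset _ _)
  · intro j hj
    simp only [Finset.mem_filter, not_le] at hj
    exact ⟨hj.1.2.2, hj.2⟩
end
end
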